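/- arXiv:1106.1879 — 2 statements merged into one kernel-verified Lean document; each statement's English description precedes it below -/
import Mathlib

section
/- Let Y = {Yⁿ} be the mixed source of two i.i.d. sources Y₁, Y₂ on a countable alphabet 𝒴 with weights w(1), w(2). Let {z_n} be any sequence of real numbers and let {γ_n} be a sequence with γ₁ > γ₂ > ⋯ > 0, γ_n → 0, and √n·γ_n → ∞. Then for i = 1, 2 and all sufficiently large n, Pr{ (1/√n) log(1/P_{Yⁿ}(Yᵢⁿ)) ≥ z_n } ≤ Pr{ (1/√n) log(1/P_{Yᵢⁿ}(Yᵢⁿ)) ≥ z_n − γ_n }, where Yᵢⁿ is distributed according to the n-fold i.i.d. extension P_{Yᵢⁿ} of Yᵢ. -/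
open Filter MeasureTheory
open scoped BigOperators

noncomputable section

/-- Probability of a set under a probability mass function. -/
def prb {α : Type*} (P : α → ℝ) (s : Set α) : ℝ := ∑' a, s.indicator P a

/-- Variational distance between two mass functions on the same countable set. -/
def varDist {α : Type*} (P Q : α → ℝ) : ℝ := ∑' a, |P a - Q a|

/-- `P` is a probability mass function. -/
def IsPMF {α : Type*} (P : α → ℝ) : Prop := (∀ a, 0 ≤ P a) ∧ HasSum P 1

/-- Pushforward of a mass function through a map. -/
def pushMap {α β : Type*} (P : α → ℝ) (φ : α → β) : β → ℝ :=
  fun b => ∑' a, Set.indicator {a | φ a = b} P a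

/-- The uniform mass function on `Fin M`. -/
def unif (M : ℕ) : Fin M → ℝ := fun _ => 1 / (M : ℝ)

/-- The n-fold i.i.d. extension of a mass function. -/
def prodP {α : Type*} (P : α → ℝ) (n : ℕ) : (Fin n → α) → ℝ := fun y => ∏ j, P (y j)

/-- Mixed source of two i.i.d. sources with weights `w1`, `w2`. -/
def mix2 {α : Type*} (P1 P2 : α → ℝ) (w1 w2 : ℝ) (n : ℕ) : (Fin n → α) → ℝ :=
  fun y => w1 * prodP P1 n y + w2 * prodP P2 n y

/-! If `w` is the weight of component `i`, then `mix2 ≥ w · P_{Yᵢⁿ}` pointwise, so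
`log (1 / P_{Yⁿ}(y)) ≤ log (1 / w) + log (1 / P_{Yᵢⁿ}(y))` wherever `P_{Yᵢⁿ}(y) > 0`. After scaling by
`1/√n`, the constant `log (1 / w) / √n` is eventually below `γ n` because `√n γ n → ∞`; so, up to a
`P_{Yᵢⁿ}`-null set, the first event is contained in the second. -/

section

variable {α : Type*}

lemma prodP_nonneg {P : α → ℝ} (hP : ∀ a, 0 ≤ P a) (n : ℕ) (y : Fin n → α) :
    0 ≤ prodP P n y :=
  Finset.prod_nonneg fun j _ => hP (y j)

lemma summable_prodP {P : α → ℝ} (hP : ∀ a, 0 ≤ P a) (hs : Summable P) (n : ℕ) :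
    Summable (prodP P n) := by
  induction n with
  | zero => exact .of_finite
  | succ n ih =>
    have hcons : prodP P (n + 1) ∘ Fin.consEquiv (fun _ => α) =
        fun p : α × (Fin n → α) => P p.1 * prodP P n p.2 := by
      funext p
      simp [prodP, Fin.prod_univ_succ]
    rw [← (Fin.consEquiv fun _ => α).summable_iff, hcons]
    exact hs.mul_of_nonneg ih hP (prodP_nonneg hP n)

lemma mul_prodP_le_mix2_left {P1 P2 : α → ℝ} (hP2 : ∀ a, 0 ≤ P2 a) {w1 w2 : ℝ} (hw2 : 0 ≤ w2)
    (n : ℕ) (y : Fin n → α) : w1 * prodP P1 n y ≤ mix2 P1 P2 w1 w2 n y :=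
  le_add_of_nonneg_right (mul_nonneg hw2 (prodP_nonneg hP2 n y))

lemma mul_prodP_le_mix2_right {P1 P2 : α → ℝ} (hP1 : ∀ a, 0 ≤ P1 a) {w1 w2 : ℝ} (hw1 : 0 ≤ w1)
    (n : ℕ) (y : Fin n → α) : w2 * prodP P2 n y ≤ mix2 P1 P2 w1 w2 n y :=
  le_add_of_nonneg_left (mul_nonneg hw1 (prodP_nonneg hP1 n y))

lemma prb_mono {P : α → ℝ} (hP : ∀ a, 0 ≤ P a) (hs : Summable P) {s t : Set α}
    (hst : s ∩ Function.support P ⊆ t) : prb P s ≤ prb P t := by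
  unfold prb
  rw [← Set.indicator_inter_support]
  exact (hs.indicator _).tsum_le_tsum (Set.indicator_le_indicator_of_subset hst hP) (hs.indicator t)

end

lemma Real.log_one_div_le_of_mul_le {w p q : ℝ} (hw : 0 < w) (hp : 0 < p) (h : w * p ≤ q) :
    Real.log (1 / q) ≤ Real.log (1 / w) + Real.log (1 / p) := by
  rw [← Real.log_mul (by positivity) (by positivity), one_div_mul_one_div]
  exact Real.log_le_log (one_div_pos.2 ((mul_pos hw hp).trans_le h))
    (one_div_le_one_div_of_le (mul_pos hw hp) h)

lemma prb_selfInfo_le {α : Type*} {P Q : α → ℝ} (hP : ∀ a, 0 ≤ P a) (hs : Summable P)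
    {w : ℝ} (hw : 0 < w) (hQ : ∀ a, w * P a ≤ Q a) {r z δ : ℝ} (hr : 0 ≤ r)
    (hδ : r * Real.log (1 / w) ≤ δ) :
    prb P {a | z ≤ r * Real.log (1 / Q a)} ≤ prb P {a | z - δ ≤ r * Real.log (1 / P a)} := by
  refine prb_mono hP hs fun a ⟨ha, hPa⟩ => ?_
  have hlog := mul_le_mul_of_nonneg_left
    (Real.log_one_div_le_of_mul_le hw ((hP a).lt_of_ne' hPa) (hQ a)) hr
  rw [mul_add] at hlog
  exact (sub_le_sub_right ha δ).trans (by linarith)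

lemma eventually_one_div_sqrt_mul_le {γ : ℕ → ℝ}
    (hγ : Tendsto (fun n : ℕ => Real.sqrt n * γ n) atTop atTop) (c : ℝ) :
    ∀ᶠ n : ℕ in atTop, 1 / Real.sqrt n * c ≤ γ n := by
  filter_upwards [hγ.eventually_ge_atTop c, eventually_gt_atTop 0] with n hc hn
  have hsqrt : 0 < Real.sqrt n := Real.sqrt_pos.2 (Nat.cast_pos.2 hn)
  rwa [one_div, inv_mul_le_iff₀ hsqrt]

theorem mixed_source_lemma_second_general
    {𝒴 : Type*}
    (P1 P2 : 𝒴 → ℝ) (hP1 : IsPMF P1) (hP2 : IsPMF P2)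
    (w1 w2 : ℝ) (hw1 : 0 < w1) (hw2 : 0 < w2)
    (z γ : ℕ → ℝ)
    (hγtop : Filter.Tendsto (fun n : ℕ => Real.sqrt n * γ n) Filter.atTop Filter.atTop)
    (Pi : 𝒴 → ℝ) (hPi : Pi = P1 ∨ Pi = P2) :
    ∃ N : ℕ, ∀ n ≥ N,
      prb (prodP Pi n)
          {y | z n ≤ (1 / Real.sqrt n) * Real.log (1 / mix2 P1 P2 w1 w2 n y)}
        ≤ prb (prodP Pi n)
            {y | z n - γ n ≤ (1 / Real.sqrt n) * Real.log (1 / prodP Pi n y)} := by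
  obtain ⟨hPi_pmf, w, hw, hdom⟩ : IsPMF Pi ∧ ∃ w, 0 < w ∧
      ∀ n y, w * prodP Pi n y ≤ mix2 P1 P2 w1 w2 n y := by
    rcases hPi with rfl | rfl
    · exact ⟨hP1, w1, hw1, mul_prodP_le_mix2_left hP2.1 hw2.le⟩
    · exact ⟨hP2, w2, hw2, mul_prodP_le_mix2_right hP1.1 hw1.le⟩
  obtain ⟨N, hN⟩ := (eventually_one_div_sqrt_mul_le hγtop (Real.log (1 / w))).exists_forall_of_atTop
  exact ⟨N, fun n hn => prb_selfInfo_le (prodP_nonneg hPi_pmf.1 n)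
    (summable_prodP hPi_pmf.1 hPi_pmf.2.summable n) hw (hdom n) (by positivity) (hN n hn)⟩

/-- Key lemma for mixed sources (Han), second inequality: for a mixed source
`Yⁿ = w(1) Y₁ⁿ + w(2) Y₂ⁿ` of two i.i.d. sources, any real sequence `z_n` and any
sequence `γ_n` with `γ₁ > γ₂ > ⋯ > 0`, `γ_n → 0`, `√n γ_n → ∞`, one has for
`i = 1,2` and all sufficiently large `n`:
`Pr{ (1/√n) log(1/P_{Yⁿ}(Yᵢⁿ)) ≥ z_n } ≤ Pr{ (1/√n) log(1/P_{Yᵢⁿ}(Yᵢⁿ)) ≥ z_n − γ_n }`. -/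
theorem mixed_source_lemma_second
    {𝒴 : Type*} [Countable 𝒴]
    (P1 P2 : 𝒴 → ℝ) (hP1 : IsPMF P1) (hP2 : IsPMF P2)
    (w1 w2 : ℝ) (hw1 : 0 < w1) (hw2 : 0 < w2) (hw : w1 + w2 = 1)
    (z γ : ℕ → ℝ) (hγanti : StrictAnti γ) (hγpos : ∀ n, 0 < γ n)
    (hγ0 : Filter.Tendsto γ Filter.atTop (nhds 0))
    (hγtop : Filter.Tendsto (fun n : ℕ => Real.sqrt n * γ n) Filter.atTop Filter.atTop)
    (Pi : 𝒴 → ℝ) (hPi : Pi = P1 ∨ Pi = P2) :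
    ∃ N : ℕ, ∀ n ≥ N,
      prb (prodP Pi n)
          {y | z n ≤ (1 / Real.sqrt n) * Real.log (1 / mix2 P1 P2 w1 w2 n y)}
        ≤ prb (prodP Pi n)
            {y | z n - γ n ≤ (1 / Real.sqrt n) * Real.log (1 / prodP Pi n y)} :=
  mixed_source_lemma_second_general P1 P2 hP1 hP2 w1 w2 hw1 hw2 z γ hγtop Pi hPi
end
end

section
/- Let X = {Xⁿ} and Y = {Yⁿ} be arbitrary general sources where Xⁿ and Yⁿ take values in countable sets 𝒳ⁿ and 𝒴ⁿ respectively. Then for every n ≥ 1, every real number z_n, and every γ > 0, there exists a mapping φ_n : 𝒳ⁿ → 𝒴ⁿ such that d(φ_n(Xⁿ), Yⁿ) ≤ 2·max( Pr{Xⁿ ∉ S_n(z_n + γ)}, Pr{Yⁿ ∉ T_n(z_n)} ) + 2·e^{−√n·γ}. -/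
open Filter MeasureTheory
open scoped BigOperators

noncomputable section

/-!
Put `ε = exp (-√n (z + γ))` and `δ = exp (-√n z)`. There are at most `1 / δ` points `y` with
`Q y ≥ δ`; in turn, each of them receives a block of the still unused points `x` with
`P x ≤ ε` whose mass reaches `Q y` with an overshoot below `ε`, unless these points run out;
all other `x` are sent anywhere. As `d(μ, ν) = 2 ∑ (ν - μ)⁺` for probability vectors, if every
block reaches its target then `d` is at most twice the `Q`-mass of `{Q < δ}`; otherwise every
`x` with `P x ≤ ε` is used, so `d` is at most twice the `P`-mass of `{P > ε}` plus `2 ε / δ`,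
and `ε / δ = exp (-√n γ)`.
-/

section
variable {α β : Type*}

lemma prb_le_prb_of_forall_pos_mem {P : α → ℝ} (hP0 : ∀ a, 0 ≤ P a) (hP : Summable P)
    {s t : Set α} (hst : ∀ a ∈ s, 0 < P a → a ∈ t) : prb P s ≤ prb P t := by
  refine (hP.indicator s).tsum_le_tsum (fun a => ?_) (hP.indicator t)
  by_cases has : a ∈ s
  · rcases (hP0 a).eq_or_lt with h0 | hpos
    · rw [Set.indicator_of_mem has, ← h0]
      exact Set.indicator_nonneg (fun a _ => hP0 a) a
    · simp [Set.indicator_of_mem has, Set.indicator_of_mem (hst a has hpos)]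
  · simpa [Set.indicator_of_notMem has] using Set.indicator_nonneg (fun a _ => hP0 a) a

lemma prb_add_prb_compl {P : α → ℝ} {p : ℝ} (hP : HasSum P p) (s : Set α) :
    prb P s + prb P sᶜ = p := by
  rw [prb, prb, ← (hP.summable.indicator s).tsum_add (hP.summable.indicator sᶜ),
    ← hP.tsum_eq]
  exact tsum_congr fun a => Set.indicator_self_add_compl_apply s P a

lemma prb_coe_finset (P : α → ℝ) (F : Finset α) : prb P ↑F = ∑ a ∈ F, P a := by
  rw [prb, ← tsum_subtype]
  exact F.tsum_subtype' P

lemma prb_biUnion_finset {P : α → ℝ} (hP : Summable P) (T : Finset β) {B : β → Set α}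
    (hB : (↑T : Set β).PairwiseDisjoint B) :
    prb P (⋃ b ∈ T, B b) = ∑ b ∈ T, prb P (B b) := by
  rw [prb, Finset.indicator_biUnion T B hB]
  exact Summable.tsum_finsetSum fun b _ => hP.indicator (B b)

lemma hasSum_pushMap {P : α → ℝ} {p : ℝ} (hP : HasSum P p) (φ : α → β) :
    HasSum (pushMap P φ) p := by
  have h := hP.tsum_fiberwise φ
  simp only [tsum_subtype] at h
  exact h

lemma pushMap_nonneg {P : α → ℝ} (hP0 : ∀ a, 0 ≤ P a) (φ : α → β) (b : β) :
    0 ≤ pushMap P φ b :=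
  tsum_nonneg fun a => Set.indicator_nonneg (fun a _ => hP0 a) a

lemma varDist_eq_two_mul_tsum_posPart {P Q : α → ℝ} {p : ℝ} (hP0 : ∀ a, 0 ≤ P a)
    (hP : HasSum P p) (hQ : HasSum Q p) : varDist P Q = 2 * ∑' a, (Q a - P a)⁺ := by
  have hpos : Summable fun a => (Q a - P a)⁺ :=
    hQ.summable.abs.of_nonneg_of_le (fun a => posPart_nonneg _)
      fun a => max_le (by linarith [hP0 a, le_abs_self (Q a)]) (abs_nonneg _)
  have habs : ∀ a, |P a - Q a| = 2 * (Q a - P a)⁺ + (P a - Q a) := by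
    intro a
    rcases le_total (Q a - P a) 0 with h | h
    · rw [posPart_eq_zero.2 h, abs_of_nonneg (by linarith)]; ring
    · rw [posPart_eq_self.2 h, abs_of_nonpos (by linarith)]; ring
  rw [varDist, tsum_congr habs, (hpos.mul_left 2).tsum_add (hP.summable.sub hQ.summable),
    tsum_mul_left, (hP.sub hQ).tsum_eq, sub_self, add_zero]

lemma tsum_posPart_sub_le {μ ν m : α → ℝ} (hμ : ∀ a, 0 ≤ μ a) (hν0 : ∀ a, 0 ≤ ν a)
    (hν : Summable ν) (T : Finset α) (hm : ∀ a ∈ T, m a ≤ μ a) :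
    ∑' a, (ν a - μ a)⁺ ≤ ∑ a ∈ T, (ν a - m a)⁺ + prb ν (↑T)ᶜ := by
  have hle : ∀ a, (ν a - μ a)⁺ ≤ ν a :=
    fun a => max_le (by linarith [hμ a]) (hν0 a)
  have hpos : Summable fun a => (ν a - μ a)⁺ :=
    hν.of_nonneg_of_le (fun a => posPart_nonneg _) hle
  rw [← hpos.sum_add_tsum_compl, prb, ← tsum_subtype]
  exact add_le_add (Finset.sum_le_sum fun a ha => posPart_mono (by linarith [hm a ha]))
    ((hpos.subtype _).tsum_le_tsum (fun a => hle a) (hν.subtype _))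



lemma Finset.exists_subset_le_sum_lt_add (f : α → ℝ) {F : Finset α} {t ε : ℝ} (ht : 0 ≤ t)
    (hε : 0 < ε) (hf : ∀ a ∈ F, f a ≤ ε) (hF : t ≤ ∑ a ∈ F, f a) :
    ∃ G ⊆ F, t ≤ ∑ a ∈ G, f a ∧ ∑ a ∈ G, f a < t + ε := by
  classical
  obtain ⟨G, hG, hmin⟩ := (F.powerset.filter fun G => t ≤ ∑ a ∈ G, f a).exists_min_image
    Finset.card ⟨F, by simpa using hF⟩
  rw [Finset.mem_filter, Finset.mem_powerset] at hG
  refine ⟨G, hG.1, hG.2, ?_⟩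
  rcases G.eq_empty_or_nonempty with rfl | ⟨a, ha⟩
  · simpa using add_pos_of_nonneg_of_pos ht hε
  have herase : ¬ t ≤ ∑ b ∈ G.erase a, f b := fun h => by
    have := hmin (G.erase a) (by simp [h, (G.erase_subset a).trans hG.1])
    rw [Finset.card_erase_of_mem ha] at this
    have := G.card_pos.2 ⟨a, ha⟩
    omega
  rw [← Finset.add_sum_erase G f ha]
  linarith [hf a (hG.1 ha)]

lemma exists_subset_prb_lt_add {P : α → ℝ} (hP : Summable P) {R : Set α} {t ε : ℝ}
    (ht : 0 ≤ t) (hε : 0 < ε) (hR : ∀ a ∈ R, P a ≤ ε) :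
    ∃ B ⊆ R, prb P B < t + ε ∧ (t ≤ prb P B ∨ B = R) := by
  classical
  by_cases hRt : prb P R < t + ε
  · exact ⟨R, subset_rfl, hRt, Or.inr rfl⟩
  have hlt : t < ∑' a, R.indicator P a := by rw [← prb]; linarith
  obtain ⟨F, hF⟩ := ((hP.indicator R).hasSum.eventually (eventually_gt_nhds hlt)).exists
  rw [Finset.sum_indicator_eq_sum_filter] at hF
  obtain ⟨G, hGF, hGt, hGε⟩ := Finset.exists_subset_le_sum_lt_add P ht hε
    (fun a ha => hR a (Finset.mem_filter.1 ha).2) hF.le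
  refine ⟨G, fun a ha => (Finset.mem_filter.1 (hGF ha)).2, ?_, Or.inl ?_⟩ <;>
    rwa [prb_coe_finset]

lemma exists_pairwiseDisjoint_prb_lt_add {P : α → ℝ} (hP : Summable P) {ε : ℝ} (hε : 0 < ε)
    {q : β → ℝ} (hq : ∀ b, 0 ≤ q b) (T : Finset β) {R : Set α} (hR : ∀ a ∈ R, P a ≤ ε) :
    ∃ B : β → Set α, (↑T : Set β).PairwiseDisjoint B ∧ (∀ b ∈ T, B b ⊆ R) ∧
      (∀ b ∈ T, prb P (B b) < q b + ε) ∧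
      ((∀ b ∈ T, q b ≤ prb P (B b)) ∨ R ⊆ ⋃ b ∈ T, B b) := by
  classical
  induction T using Finset.induction_on generalizing R with
  | empty => exact ⟨fun _ => ∅, by simp, by simp, by simp, Or.inl (by simp)⟩
  | insert c T hcT ih =>
    obtain ⟨C, hCR, hCε, hCq⟩ := exists_subset_prb_lt_add hP (hq c) hε hR
    obtain ⟨B, hBd, hBR, hBε, hBq⟩ := ih (R := R \ C) fun a ha => hR a ha.1
    have hBc : ∀ b ∈ T, Function.update B c C b = B b :=
      fun b hb => Function.update_of_ne (ne_of_mem_of_not_mem hb hcT) _ _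
    have hBC : ∀ b ∈ T, Disjoint C (B b) :=
      fun b hb => Set.disjoint_sdiff_right.mono_right (hBR b hb)
    refine ⟨Function.update B c C, ?_, ?_, ?_, ?_⟩
    · rw [Finset.coe_insert, Set.pairwiseDisjoint_insert]
      refine ⟨fun i hi j hj hij => ?_, fun j hj _ => ?_⟩
      · simpa only [Function.onFun, hBc i hi, hBc j hj] using hBd hi hj hij
      · simpa only [Function.update_self, hBc j hj] using hBC j hj
    · simp only [Finset.forall_mem_insert, Function.update_self]
      exact ⟨hCR, fun b hb => (hBc b hb).symm ▸ (hBR b hb).trans Set.sdiff_subset⟩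
    · simp only [Finset.forall_mem_insert, Function.update_self]
      exact ⟨hCε, fun b hb => (hBc b hb).symm ▸ hBε b hb⟩
    · simp only [Finset.forall_mem_insert, Finset.set_biUnion_insert, Function.update_self]
      rcases hCq with hCq | rfl
      · rcases hBq with hBq | hcover
        · exact Or.inl ⟨hCq, fun b hb => (hBc b hb).symm ▸ hBq b hb⟩
        · refine Or.inr fun a ha => ?_
          by_cases haC : a ∈ C
          · exact Or.inl haC
          · obtain ⟨b, hb, hab⟩ := Set.mem_iUnion₂.1 (hcover ⟨ha, haC⟩)
            exact Or.inr (Set.mem_iUnion₂.2 ⟨b, hb, (hBc b hb).symm ▸ hab⟩)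
      · exact Or.inr Set.subset_union_left



lemma Set.PairwiseDisjoint.exists_forall_mem_eq [Nonempty β] {T : Set β} {B : β → Set α}
    (hB : T.PairwiseDisjoint B) : ∃ φ : α → β, ∀ b ∈ T, ∀ a ∈ B b, φ a = b := by
  classical
  refine ⟨fun a => if h : ∃ b ∈ T, a ∈ B b then h.choose else Classical.arbitrary β,
    fun b hb a ha => ?_⟩
  have h : ∃ b ∈ T, a ∈ B b := ⟨b, hb, ha⟩
  dsimp only
  rw [dif_pos h]
  exact hB.elim_set h.choose_spec.1 hb a h.choose_spec.2 ha

lemma IsPMF.nonempty {P : α → ℝ} (hP : IsPMF P) : Nonempty α := by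
  by_contra h
  rw [not_nonempty_iff] at h
  exact one_ne_zero (hP.2.unique (hasSum_empty (f := P)))

lemma Summable.finite_setOf_le {Q : α → ℝ} (hQ : Summable Q) {δ : ℝ} (hδ : 0 < δ) :
    {a | δ ≤ Q a}.Finite := by
  simpa using Filter.eventually_cofinite.1 (hQ.tendsto_cofinite_zero.eventually (gt_mem_nhds hδ))

lemma varDist_pushMap_le {P : α → ℝ} {Q : β → ℝ} (hP : IsPMF P) (hQ : IsPMF Q) {φ : α → β}
    (T : Finset β) {B : β → Set α} (hφ : ∀ b ∈ T, ∀ a ∈ B b, φ a = b) :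
    varDist (pushMap P φ) Q ≤ 2 * (∑ b ∈ T, (Q b - prb P (B b))⁺ + prb Q (↑T)ᶜ) := by
  rw [varDist_eq_two_mul_tsum_posPart (pushMap_nonneg hP.1 φ) (hasSum_pushMap hP.2 φ) hQ.2]
  refine mul_le_mul_of_nonneg_left (tsum_posPart_sub_le (pushMap_nonneg hP.1 φ) hQ.1
    hQ.2.summable T fun b hb => ?_) zero_le_two
  exact prb_le_prb_of_forall_pos_mem hP.1 hP.2.summable fun a ha _ => hφ b hb a ha

lemma IsPMF.card_mul_le_one {Q : α → ℝ} (hQ : IsPMF Q) {δ : ℝ} (T : Finset α)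
    (hT : ∀ a ∈ T, δ ≤ Q a) : T.card * δ ≤ 1 := by
  rw [← nsmul_eq_mul]
  exact (T.card_nsmul_le_sum Q δ hT).trans (sum_le_hasSum T (fun a _ => hQ.1 a) hQ.2)

theorem exists_varDist_pushMap_le {P : α → ℝ} {Q : β → ℝ} (hP : IsPMF P) (hQ : IsPMF Q)
    {ε δ : ℝ} (hε : 0 < ε) (hδ : 0 < δ) :
    ∃ φ : α → β, varDist (pushMap P φ) Q ≤
      2 * max (prb P {a | P a ≤ ε}ᶜ) (prb Q {b | δ ≤ Q b}ᶜ) + 2 * (ε / δ) := by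
  set T := (hQ.2.summable.finite_setOf_le hδ).toFinset
  have hT : (↑T : Set β) = {b | δ ≤ Q b} := Set.Finite.coe_toFinset _
  have hTε : T.card * ε ≤ ε / δ := by
    rw [le_div_iff₀ hδ, mul_right_comm]
    exact mul_le_of_le_one_left hε.le (hQ.card_mul_le_one T fun b hb => by simpa [T] using hb)
  obtain ⟨B, hBd, -, hBε, hBq⟩ := exists_pairwiseDisjoint_prb_lt_add hP.2.summable hε hQ.1 T
    (R := {a | P a ≤ ε}) fun a ha => ha
  have := hQ.nonempty
  obtain ⟨φ, hφ⟩ := hBd.exists_forall_mem_eq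
  refine ⟨φ, ?_⟩
  have hdist := varDist_pushMap_le hP hQ T hφ
  rw [← hT]
  rcases hBq with hmet | hcover
  · have hzero : ∑ b ∈ T, (Q b - prb P (B b))⁺ = 0 :=
      Finset.sum_eq_zero fun b hb => posPart_eq_zero.2 (sub_nonpos.2 (hmet b hb))
    rw [hzero, zero_add] at hdist
    linarith [le_max_right (prb P {a | P a ≤ ε}ᶜ) (prb Q (↑T)ᶜ), div_pos hε hδ]
  · have hdef : ∑ b ∈ T, (Q b - prb P (B b))⁺ ≤ ∑ b ∈ T, (Q b - prb P (B b) + ε) :=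
      Finset.sum_le_sum fun b hb => max_le (by linarith) (by linarith [hBε b hb])
    have hQT : ∑ b ∈ T, Q b + prb Q (↑T)ᶜ = 1 := by
      rw [← prb_coe_finset]; exact prb_add_prb_compl hQ.2 _
    have hPB : 1 - prb P {a | P a ≤ ε}ᶜ ≤ ∑ b ∈ T, prb P (B b) := by
      rw [← prb_biUnion_finset hP.2.summable T hBd, ← prb_add_prb_compl hP.2 {a | P a ≤ ε}]
      linarith [prb_le_prb_of_forall_pos_mem hP.1 hP.2.summable fun a ha _ => hcover ha]
    rw [Finset.sum_add_distrib, Finset.sum_sub_distrib, Finset.sum_const, nsmul_eq_mul] at hdef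
    linarith [le_max_left (prb P {a | P a ≤ ε}ᶜ) (prb Q (↑T)ᶜ)]

end

lemma le_one_div_mul_log_one_div_iff {c p t : ℝ} (hc : 0 < c) (hp : 0 < p) :
    t ≤ 1 / c * Real.log (1 / p) ↔ p ≤ Real.exp (-(c * t)) := by
  rw [one_div_mul_eq_div, le_div_iff₀ hc, one_div, Real.log_inv, le_neg,
    Real.log_le_iff_le_exp hp, mul_comm]

lemma one_div_mul_log_one_div_le_iff {c p t : ℝ} (hc : 0 < c) (hp : 0 < p) :
    1 / c * Real.log (1 / p) ≤ t ↔ Real.exp (-(c * t)) ≤ p := by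
  rw [one_div_mul_eq_div, div_le_iff₀ hc, one_div, Real.log_inv, neg_le,
    Real.le_log_iff_exp_le hp, mul_comm]

theorem approximation_lemma_direct_general
    {𝒳 𝒴 : Type*}
    (P : 𝒳 → ℝ) (Q : 𝒴 → ℝ) (hP : IsPMF P) (hQ : IsPMF Q)
    (n : ℕ) (hn : 1 ≤ n) (z γ : ℝ) :
    ∃ φ : 𝒳 → 𝒴,
      varDist (pushMap P φ) Q ≤
        2 * max (prb P ({x | z + γ ≤ (1 / Real.sqrt n) * Real.log (1 / P x)}ᶜ))
                (prb Q ({y | (1 / Real.sqrt n) * Real.log (1 / Q y) ≤ z}ᶜ))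
          + 2 * Real.exp (-(Real.sqrt n * γ)) := by
  have hc : 0 < Real.sqrt n := Real.sqrt_pos.2 (by exact_mod_cast hn)
  obtain ⟨φ, hφ⟩ := exists_varDist_pushMap_le hP hQ (Real.exp_pos (-(Real.sqrt n * (z + γ))))
    (Real.exp_pos (-(Real.sqrt n * z)))
  refine ⟨φ, hφ.trans ?_⟩
  rw [← Real.exp_sub,
    show -(Real.sqrt n * (z + γ)) - -(Real.sqrt n * z) = -(Real.sqrt n * γ) by ring]
  -- `log (1 / 0) = 0`, so the sets can only be compared at points of positive mass
  gcongr 2 * max ?_ ?_ + _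
  · refine prb_le_prb_of_forall_pos_mem hP.1 hP.2.summable fun x hx hpos => ?_
    rwa [Set.mem_compl_iff, Set.mem_ofPred_eq, le_one_div_mul_log_one_div_iff hc hpos]
  · refine prb_le_prb_of_forall_pos_mem hQ.1 hQ.2.summable fun y hy hpos => ?_
    rwa [Set.mem_compl_iff, Set.mem_ofPred_eq, one_div_mul_log_one_div_le_iff hc hpos]

/-- Lemma 1 (Han): for arbitrary general sources `X`, `Y`, every `n ≥ 1`, every real
`z_n` and every `γ > 0`, there exists a mapping `φ_n : 𝒳ⁿ → 𝒴ⁿ` such that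
`d(φ_n(Xⁿ), Yⁿ) ≤ 2 max( Pr{Xⁿ ∉ S_n(z_n+γ)}, Pr{Yⁿ ∉ T_n(z_n)} ) + 2 e^{−√n γ}`,
where `S_n(c) = {x | (1/√n) log(1/P_{Xⁿ}(x)) ≥ c}` and
`T_n(c) = {y | (1/√n) log(1/P_{Yⁿ}(y)) ≤ c}`. -/
theorem approximation_lemma_direct
    {𝒳 𝒴 : Type*} [Countable 𝒳] [Countable 𝒴]
    (P : 𝒳 → ℝ) (Q : 𝒴 → ℝ) (hP : IsPMF P) (hQ : IsPMF Q)
    (n : ℕ) (hn : 1 ≤ n) (z γ : ℝ) (hγ : 0 < γ) :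
    ∃ φ : 𝒳 → 𝒴,
      varDist (pushMap P φ) Q ≤
        2 * max (prb P ({x | z + γ ≤ (1 / Real.sqrt n) * Real.log (1 / P x)}ᶜ))
                (prb Q ({y | (1 / Real.sqrt n) * Real.log (1 / Q y) ≤ z}ᶜ))
          + 2 * Real.exp (-(Real.sqrt n * γ)) :=
  approximation_lemma_direct_general P Q hP hQ n hn z γ
end
end
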